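/- Let A → B and C → B be ring homomorphisms with A → B surjective with nilpotent kernel. Then for any finitely generated idempotent-lifting-free data, the map Spec(A ×_B C) → Spec A ⊔_{Spec B} Spec C on underlying topological spaces is a homeomorphism onto the pushout; in particular, the prime spectrum of A ×_B C is in natural bijection with the pushout of the spectra. -/

import Mathlib

/-!
The projection `A ×_B C → C` is surjective, and its kernel consists of the pairs `(a, 0)` with
`a ∈ ker f`, which are nilpotent. A surjection with nil kernel induces a homeomorphism on spectra.
-/

open PrimeSpectrum

lemma Ideal.le_nilradical_of_isNilpotent {R : Type*} [CommSemiring R] {I : Ideal R}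
    (hI : IsNilpotent I) : I ≤ nilradical R :=
  fun _ hx ↦ let ⟨n, hn⟩ := hI; ⟨n, hn ▸ Ideal.pow_mem_pow hx n⟩

namespace RingHom

variable {A B C : Type*} [CommRing A] [CommRing B] [CommRing C] (f : A →+* B) (g : C →+* B)

def fiberProdSnd : eqLocus (f.comp (fst A C)) (g.comp (snd A C)) →+* C :=
  (snd A C).comp (eqLocus (f.comp (fst A C)) (g.comp (snd A C))).subtype

variable {f g}

lemma fiberProdSnd_surjective (hf : Function.Surjective f) :
    Function.Surjective (fiberProdSnd f g) := fun c ↦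
  let ⟨a, ha⟩ := hf (g c)
  ⟨⟨(a, c), ha⟩, rfl⟩

lemma ker_fiberProdSnd_le_nilradical (hker : ker f ≤ nilradical A) :
    ker (fiberProdSnd f g) ≤ nilradical _ := by
  rintro ⟨⟨a, c⟩, hac⟩ (rfl : c = 0)
  have ha : a ∈ ker f := (show f a = g 0 from hac).trans (map_zero g)
  obtain ⟨m, hm⟩ := mem_nilradical.mp (hker ha)
  -- `m + 1` rather than `m`, because the `C`-component `0 ^ 0` would be `1`
  refine ⟨m + 1, ?_⟩
  ext <;> simp [pow_succ, hm]

lemma isHomeomorph_comap_fiberProdSnd (hf : Function.Surjective f)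
    (hker : ker f ≤ nilradical A) : IsHomeomorph (comap (fiberProdSnd f g)) :=
  isHomeomorph_comap _ (fun c ↦ ⟨1, one_pos, by simpa using fiberProdSnd_surjective hf c⟩)
    (ker_fiberProdSnd_le_nilradical hker)

end RingHom

set_option synthInstance.maxHeartbeats 800000 in
/-- Let `A → B` and `C → B` be ring homomorphisms with `A → B`
surjective with nilpotent kernel.  Then `Spec(A ×_B C) → Spec A ⊔_{Spec B} Spec C`
is a homeomorphism onto the pushout; since `ker(A → B)` is nilpotent,
`Spec B → Spec A` is a homeomorphism, so the pushout is `Spec C` and the claim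
is that the projection `A ×_B C → C` (from the equalizer subring of `A × C`)
induces a homeomorphism `Spec C → Spec(A ×_B C)`. -/
theorem stmt15 (A B C : Type) [CommRing A] [CommRing B] [CommRing C]
    (f : A →+* B) (g : C →+* B) (hf : Function.Surjective f)
    (hnil : ∃ n : ℕ, RingHom.ker f ^ n = ⊥) :
    IsHomeomorph (PrimeSpectrum.comap
      ((RingHom.snd A C).comp
        (RingHom.eqLocus (f.comp (RingHom.fst A C)) (g.comp (RingHom.snd A C))).subtype)) :=
  RingHom.isHomeomorph_comap_fiberProdSnd hf (Ideal.le_nilradical_of_isNilpotent hnil)
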